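/- Define ν = max over u in range(A^T) of u^T [∑_{i=1}^m A_{i:}^T A_{i:} (A^T A)† A_{i:}^T A_{i:}] u / (u^T (A^T A / m) u) for a matrix A with normalized rows (||A_{i:}|| = 1). Then 1 ≤ ν ≤ m/λ_min^+(A^T A). -/

import Mathlib

open Matrix Finset

/-!
Write `G = AᵀA` and `aᵢ` for the rows of `A`. The numerator is `∑ᵢ cᵢ (aᵢ ⬝ u)²` with
`cᵢ = aᵢᵀ W aᵢ`, and `uᵀ G u = ∑ᵢ (aᵢ ⬝ u)²`, so it suffices to show `1 ≤ m cᵢ` and `λ cᵢ ≤ 1`.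
As `range G = range Aᵀ`, each row is `aᵢ = G y`, whence `cᵢ = yᵀ G W G y = yᵀ G y = |A y|²`.
Cauchy–Schwarz applied to `1 = |aᵢ|² = (A aᵢ) ⬝ (A y)`, with `|A aᵢ|² ≤ m` for unit rows, gives the
lower bound. The upper bound is `λ yᵀ G y ≤ |G y|² = 1`: the matrix `G² - λG` is positive
semidefinite, its eigenvalues `μ(μ - λ)` being nonnegative because `μ = 0` or `μ ≥ λ`.
-/

namespace Matrix

section CommSemiring

variable {ι κ R : Type*} [Fintype ι] [CommSemiring R]

lemma transpose_transpose_mul_self (A : Matrix ι κ R) : (Aᵀ * A)ᵀ = Aᵀ * A := by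
  rw [transpose_mul, transpose_transpose]

variable [Fintype κ]

lemma dotProduct_transpose_mul_self_mulVec (A : Matrix ι κ R) (x y : κ → R) :
    x ⬝ᵥ (Aᵀ * A) *ᵥ y = A *ᵥ x ⬝ᵥ A *ᵥ y := by
  rw [← mulVec_mulVec, dotProduct_mulVec, vecMul_transpose]

lemma mulVec_dotProduct_mulVec_mulVec_of_mul_mul_eq {G W : Matrix κ κ R} (hGT : Gᵀ = G)
    (hW : G * W * G = G) (y : κ → R) : G *ᵥ y ⬝ᵥ W *ᵥ (G *ᵥ y) = y ⬝ᵥ G *ᵥ y := by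
  calc G *ᵥ y ⬝ᵥ W *ᵥ (G *ᵥ y) = y ⬝ᵥ (G * W * G) *ᵥ y := by
        rw [← mulVec_mulVec, ← mulVec_mulVec, dotProduct_mulVec y G, ← mulVec_transpose, hGT]
    _ = y ⬝ᵥ G *ᵥ y := by rw [hW]

lemma mulVec_dotProduct_self_eq_sum (A : Matrix ι κ R) (x : κ → R) :
    A *ᵥ x ⬝ᵥ A *ᵥ x = ∑ i, (A i ⬝ᵥ x) ^ 2 := by
  simp only [dotProduct, sq]
  rfl

lemma dotProduct_sum_vecMulVec_mul_mulVec (a : ι → κ → R) (W : Matrix κ κ R) (u : κ → R) :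
    u ⬝ᵥ (∑ i, vecMulVec (a i) (a i) * W * vecMulVec (a i) (a i)) *ᵥ u =
      ∑ i, (a i ⬝ᵥ W *ᵥ a i) * (a i ⬝ᵥ u) ^ 2 := by
  rw [sum_mulVec, dotProduct_sum]
  refine Finset.sum_congr rfl fun i _ => ?_
  simp only [← mulVec_mulVec, vecMulVec_mulVec, op_smul_eq_smul, mulVec_smul, dotProduct_smul,
    smul_eq_mul, dotProduct_comm u (a i)]
  ring

end CommSemiring

variable {ι κ : Type*} [Fintype ι] [Fintype κ]

lemma dotProduct_self_pos_iff {v : κ → ℝ} : 0 < v ⬝ᵥ v ↔ v ≠ 0 := by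
  simpa only [star_trivial] using dotProduct_star_self_pos_iff (v := v)

lemma dotProduct_sq_le_mul (x y : κ → ℝ) : (x ⬝ᵥ y) ^ 2 ≤ (x ⬝ᵥ x) * (y ⬝ᵥ y) := by
  simpa only [dotProduct, sq] using Finset.sum_mul_sq_le_sq_mul_sq univ x y

lemma posSemidef_transpose_mul_self (A : Matrix ι κ ℝ) : (Aᵀ * A).PosSemidef := by
  simpa only [conjTranspose_eq_transpose_of_trivial] using posSemidef_conjTranspose_mul_self A

lemma PosSemidef.nonneg_of_mulVec_eq_smul {G : Matrix κ κ ℝ} (hG : G.PosSemidef) {μ : ℝ}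
    {v : κ → ℝ} (hv : v ≠ 0) (hμ : G *ᵥ v = μ • v) : 0 ≤ μ := by
  have h := hG.dotProduct_mulVec_nonneg v
  rw [star_trivial, hμ, dotProduct_smul, smul_eq_mul] at h
  exact nonneg_of_mul_nonneg_left h (dotProduct_self_pos_iff.mpr hv)

lemma PosSemidef.mul_self_sub_smul {G : Matrix κ κ ℝ} (hG : G.PosSemidef) {c : ℝ}
    (hc : ∀ μ, μ ≠ 0 → ∀ v, v ≠ 0 → G *ᵥ v = μ • v → c ≤ μ) :
    (G * G - c • G).PosSemidef := by
  classical
  obtain ⟨U, d, hUU, hGU, hd⟩ : ∃ (U : Matrix κ κ ℝ) (d : κ → ℝ),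
      Uᴴ * U = 1 ∧ G = U * diagonal d * Uᴴ ∧ ∀ j, 0 ≤ d j * (d j - c) := by
    refine ⟨_, hG.isHermitian.eigenvalues,
      Unitary.star_mul_self_of_mem hG.isHermitian.eigenvectorUnitary.2, ?_, fun j => ?_⟩
    · simpa only [Unitary.conjStarAlgAut_apply, RCLike.ofReal_real_eq_id, Function.id_comp,
        star_eq_conjTranspose] using hG.isHermitian.spectral_theorem
    · rcases (hG.eigenvalues_nonneg j).eq_or_lt with h | h
      · rw [← h, zero_mul]
      · have hc_le := hc _ h.ne' _
          (by simpa using hG.isHermitian.eigenvectorBasis.orthonormal.ne_zero j)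
          (hG.isHermitian.mulVec_eigenvectorBasis j)
        exact mul_nonneg h.le (sub_nonneg.mpr hc_le)
  have hD : diagonal (fun j => d j * (d j - c)) = diagonal d * diagonal d - c • diagonal d := by
    rw [diagonal_mul_diagonal, ← diagonal_smul, diagonal_sub]
    congr 1
    ext j
    simp only [Pi.smul_apply, smul_eq_mul]
    ring
  have hG_sub : G * G - c • G = U * diagonal (fun j => d j * (d j - c)) * Uᴴ := by
    rw [hD, hGU, Matrix.mul_sub, Matrix.sub_mul, Matrix.mul_smul, Matrix.smul_mul]
    congr 1
    calc _ = U * diagonal d * (Uᴴ * U) * diagonal d * Uᴴ := by simp only [Matrix.mul_assoc]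
      _ = _ := by rw [hUU, Matrix.mul_one, Matrix.mul_assoc U]
  rw [hG_sub]
  exact (posSemidef_diagonal_iff.mpr hd).mul_mul_conjTranspose_same U

lemma PosSemidef.mul_dotProduct_mulVec_le {G : Matrix κ κ ℝ} (hG : G.PosSemidef) {c : ℝ}
    (hc : ∀ μ, μ ≠ 0 → ∀ v, v ≠ 0 → G *ᵥ v = μ • v → c ≤ μ) (y : κ → ℝ) :
    c * (y ⬝ᵥ G *ᵥ y) ≤ G *ᵥ y ⬝ᵥ G *ᵥ y := by
  have h := (hG.mul_self_sub_smul hc).dotProduct_mulVec_nonneg y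
  have hGT : Gᵀ = G := by simpa only [conjTranspose_eq_transpose_of_trivial] using hG.isHermitian.eq
  rwa [star_trivial, sub_mulVec, smul_mulVec, ← mulVec_mulVec, dotProduct_sub, dotProduct_smul,
    smul_eq_mul, dotProduct_mulVec y G, ← mulVec_transpose, hGT, sub_nonneg] at h

lemma range_mulVecLin_transpose_mul_self (A : Matrix ι κ ℝ) :
    LinearMap.range (Aᵀ * A).mulVecLin = LinearMap.range Aᵀ.mulVecLin := by
  refine Submodule.eq_of_le_of_finrank_eq ?_ ?_
  · rw [mulVecLin_mul]
    exact LinearMap.range_comp_le_range _ _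
  · change (Aᵀ * A).rank = Aᵀ.rank
    rw [rank_transpose_mul_self, rank_transpose]

lemma exists_transpose_mul_self_mulVec_eq_row (A : Matrix ι κ ℝ) (i : ι) :
    ∃ y, (Aᵀ * A) *ᵥ y = A i := by
  classical
  have : A i ∈ LinearMap.range Aᵀ.mulVecLin := ⟨Pi.single i 1, by simp; rfl⟩
  rwa [← range_mulVecLin_transpose_mul_self] at this

lemma mulVec_ne_zero_of_eq_transpose_mulVec (A : Matrix ι κ ℝ) {u : κ → ℝ} {z : ι → ℝ}
    (huz : u = Aᵀ *ᵥ z) (hu : u ≠ 0) : A *ᵥ u ≠ 0 := by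
  intro hAu
  apply hu
  rw [← dotProduct_self_eq_zero]
  nth_rewrite 2 [huz]
  rw [dotProduct_mulVec, vecMul_transpose, hAu, zero_dotProduct]

lemma mulVec_dotProduct_self_le_card_mul (A : Matrix ι κ ℝ) (hrows : ∀ i, A i ⬝ᵥ A i = 1)
    (x : κ → ℝ) :
    A *ᵥ x ⬝ᵥ A *ᵥ x ≤ Fintype.card ι * (x ⬝ᵥ x) := by
  calc A *ᵥ x ⬝ᵥ A *ᵥ x = ∑ i, (A i ⬝ᵥ x) ^ 2 := mulVec_dotProduct_self_eq_sum A x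
    _ ≤ ∑ _i : ι, x ⬝ᵥ x := by
        gcongr with i
        simpa only [hrows, one_mul] using dotProduct_sq_le_mul (A i) x
    _ = _ := by simp

section GeneralizedInverse

variable {A : Matrix ι κ ℝ} (hrows : ∀ i, A i ⬝ᵥ A i = 1) {W : Matrix κ κ ℝ}
  (hW : (Aᵀ * A) * W * (Aᵀ * A) = Aᵀ * A)
include hrows hW

lemma one_le_card_mul_row_dotProduct_mulVec_row (i : ι) :
    1 ≤ Fintype.card ι * (A i ⬝ᵥ W *ᵥ A i) := by
  obtain ⟨y, hy⟩ := exists_transpose_mul_self_mulVec_eq_row A i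
  have hy_sq : A i ⬝ᵥ W *ᵥ A i = A *ᵥ y ⬝ᵥ A *ᵥ y := by
    rw [← hy, mulVec_dotProduct_mulVec_mulVec_of_mul_mul_eq (transpose_transpose_mul_self A) hW,
      dotProduct_transpose_mul_self_mulVec]
  have h_one : A *ᵥ A i ⬝ᵥ A *ᵥ y = 1 := by
    rw [← dotProduct_transpose_mul_self_mulVec, hy, hrows]
  calc (1 : ℝ) = (A *ᵥ A i ⬝ᵥ A *ᵥ y) ^ 2 := by rw [h_one, one_pow]
    _ ≤ (A *ᵥ A i ⬝ᵥ A *ᵥ A i) * (A *ᵥ y ⬝ᵥ A *ᵥ y) := dotProduct_sq_le_mul _ _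
    _ ≤ Fintype.card ι * (A *ᵥ y ⬝ᵥ A *ᵥ y) := by
        gcongr
        · rw [← dotProduct_transpose_mul_self_mulVec, ← star_trivial y]
          exact (posSemidef_transpose_mul_self A).dotProduct_mulVec_nonneg y
        · simpa only [hrows, mul_one] using mulVec_dotProduct_self_le_card_mul A hrows (A i)
    _ = _ := by rw [hy_sq]

lemma mul_row_dotProduct_mulVec_row_le_one {c : ℝ}
    (hc : ∀ μ, μ ≠ 0 → ∀ v, v ≠ 0 → (Aᵀ * A) *ᵥ v = μ • v → c ≤ μ) (i : ι) :
    c * (A i ⬝ᵥ W *ᵥ A i) ≤ 1 := by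
  obtain ⟨y, hy⟩ := exists_transpose_mul_self_mulVec_eq_row A i
  rw [← hy, mulVec_dotProduct_mulVec_mulVec_of_mul_mul_eq (transpose_transpose_mul_self A) hW]
  calc c * (y ⬝ᵥ (Aᵀ * A) *ᵥ y) ≤ (Aᵀ * A) *ᵥ y ⬝ᵥ (Aᵀ * A) *ᵥ y :=
        (posSemidef_transpose_mul_self A).mul_dotProduct_mulVec_le hc y
    _ = 1 := by rw [hy, hrows]

lemma dotProduct_transpose_mul_self_mulVec_le_card_mul (u : κ → ℝ) :
    u ⬝ᵥ (Aᵀ * A) *ᵥ u ≤ Fintype.card ι *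
      (u ⬝ᵥ (∑ i, vecMulVec (A i) (A i) * W * vecMulVec (A i) (A i)) *ᵥ u) := by
  rw [dotProduct_sum_vecMulVec_mul_mulVec A W u, dotProduct_transpose_mul_self_mulVec,
    mulVec_dotProduct_self_eq_sum, mul_sum]
  gcongr with i
  rw [← mul_assoc]
  exact le_mul_of_one_le_left (sq_nonneg _) (one_le_card_mul_row_dotProduct_mulVec_row hrows hW i)

lemma mul_dotProduct_mulVec_le_dotProduct_transpose_mul_self_mulVec {c : ℝ}
    (hc : ∀ μ, μ ≠ 0 → ∀ v, v ≠ 0 → (Aᵀ * A) *ᵥ v = μ • v → c ≤ μ) (u : κ → ℝ) :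
    c * (u ⬝ᵥ (∑ i, vecMulVec (A i) (A i) * W * vecMulVec (A i) (A i)) *ᵥ u) ≤
      u ⬝ᵥ (Aᵀ * A) *ᵥ u := by
  rw [dotProduct_sum_vecMulVec_mul_mulVec A W u, dotProduct_transpose_mul_self_mulVec,
    mulVec_dotProduct_self_eq_sum, mul_sum]
  gcongr with i
  rw [← mul_assoc]
  exact mul_le_of_le_one_left (sq_nonneg _) (mul_row_dotProduct_mulVec_row_le_one hrows hW hc i)

end GeneralizedInverse

end Matrix

theorem nu_bounds_general {m n : ℕ} (A : Matrix (Fin m) (Fin n) ℝ)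
    (hrows : ∀ i, A i ⬝ᵥ A i = 1)
    (Wd : Matrix (Fin n) (Fin n) ℝ)
    (hWd1 : (Aᵀ * A) * Wd * (Aᵀ * A) = Aᵀ * A)
    (B : Matrix (Fin n) (Fin n) ℝ)
    (hB : B = ∑ i, vecMulVec (A i) (A i) * Wd * vecMulVec (A i) (A i))
    (ν : ℝ)
    (hν : IsGreatest {r : ℝ | ∃ (u : Fin n → ℝ) (z : Fin m → ℝ), u = Aᵀ.mulVec z ∧ u ≠ 0 ∧
      r = (u ⬝ᵥ B.mulVec u) / (u ⬝ᵥ ((1 / (m : ℝ)) • (Aᵀ * A)).mulVec u)} ν)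
    (lam : ℝ)
    (hlam : IsLeast {μ : ℝ | μ ≠ 0 ∧
      ∃ v : Fin n → ℝ, v ≠ 0 ∧ (Aᵀ * A).mulVec v = μ • v} lam) :
    1 ≤ ν ∧ ν ≤ m / lam := by
  obtain ⟨u, z, huz, hu, rfl⟩ := hν.1
  obtain ⟨⟨hlam_ne, v, hv, hlam_v⟩, hlam_le⟩ := hlam
  have hlam_pos : 0 < lam := lt_of_le_of_ne
    ((posSemidef_transpose_mul_self A).nonneg_of_mulVec_eq_smul hv hlam_v) (Ne.symm hlam_ne)
  have hAu : A *ᵥ u ≠ 0 := mulVec_ne_zero_of_eq_transpose_mulVec A huz hu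
  obtain ⟨i₀, -⟩ := Function.ne_iff.mp hAu
  have hm : 0 < (m : ℝ) := Nat.cast_pos.mpr i₀.pos
  have hG_pos : 0 < u ⬝ᵥ (Aᵀ * A) *ᵥ u := by
    rw [dotProduct_transpose_mul_self_mulVec]
    exact dotProduct_self_pos_iff.mpr hAu
  have hlower := dotProduct_transpose_mul_self_mulVec_le_card_mul hrows hWd1 u
  have hupper := mul_dotProduct_mulVec_le_dotProduct_transpose_mul_self_mulVec hrows hWd1
    (fun μ hμ w hw h => hlam_le ⟨hμ, w, hw, h⟩) u
  rw [Fintype.card_fin, ← hB] at hlower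
  rw [← hB] at hupper
  rw [smul_mulVec, dotProduct_smul, smul_eq_mul, one_div_mul_eq_div]
  constructor
  · rw [le_div_iff₀ (by positivity), one_mul, div_le_iff₀ hm]
    linarith
  · rw [div_le_div_iff₀ (by positivity) hlam_pos, mul_div_cancel₀ _ hm.ne', mul_comm]
    linarith

/-- Bounds on the parameter `ν` of accelerated randomized Kaczmarz: for a
matrix `A` with unit-norm rows, with `(AᵀA)†` the Moore–Penrose pseudoinverse
(characterized by the four Penrose conditions) and
`ν = max_{u ∈ range(Aᵀ)} uᵀ[∑ᵢ Aᵢ:ᵀAᵢ: (AᵀA)† Aᵢ:ᵀAᵢ:]u / (uᵀ (AᵀA/m) u)`,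
one has `1 ≤ ν ≤ m/λ_min⁺(AᵀA) = 1/λ_min⁺(W)`. -/
theorem nu_bounds {m n : ℕ} (hm : 0 < m) (A : Matrix (Fin m) (Fin n) ℝ)
    (hrows : ∀ i, A i ⬝ᵥ A i = 1)
    (Wd : Matrix (Fin n) (Fin n) ℝ)
    (hWd1 : (Aᵀ * A) * Wd * (Aᵀ * A) = Aᵀ * A)
    (hWd2 : Wd * (Aᵀ * A) * Wd = Wd)
    (hWd3 : ((Aᵀ * A) * Wd)ᵀ = (Aᵀ * A) * Wd)
    (hWd4 : (Wd * (Aᵀ * A))ᵀ = Wd * (Aᵀ * A))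
    (B : Matrix (Fin n) (Fin n) ℝ)
    (hB : B = ∑ i, vecMulVec (A i) (A i) * Wd * vecMulVec (A i) (A i))
    (ν : ℝ)
    (hν : IsGreatest {r : ℝ | ∃ (u : Fin n → ℝ) (z : Fin m → ℝ), u = Aᵀ.mulVec z ∧ u ≠ 0 ∧
      r = (u ⬝ᵥ B.mulVec u) / (u ⬝ᵥ ((1 / (m : ℝ)) • (Aᵀ * A)).mulVec u)} ν)
    (lam : ℝ)
    (hlam : IsLeast {μ : ℝ | μ ≠ 0 ∧
      ∃ v : Fin n → ℝ, v ≠ 0 ∧ (Aᵀ * A).mulVec v = μ • v} lam) :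
    1 ≤ ν ∧ ν ≤ m / lam :=
  nu_bounds_general A hrows Wd hWd1 B hB ν hν lam hlam
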